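/- Setting q = 1 in the hook-length-type formula for Dyck paths: for a Dyck path λ of size n, the integer n! / ∏_{c ∈ Chord(λ)} l(c) is a positive integer (it counts cover-inclusive Dyck tilings above λ). -/

import Mathlib

/-- Height of the lattice path after the first `k` steps of `w`
(`true` = up step `U`, `false` = down step `D`). -/
def prefixHeight (w : List Bool) (k : ℕ) : ℤ :=
  ((w.take k).count true : ℤ) - ((w.take k).count false : ℤ)

/-- `w` is a Dyck word of size `n`: a balanced word of length `2n` in `U,D`
all of whose prefix heights are nonnegative. -/
def IsDyckWord (w : List Bool) (n : ℕ) : Prop :=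
  w.length = 2 * n ∧ w.count true = n ∧ ∀ k ≤ w.length, 0 ≤ prefixHeight w k

/-- Positions `i < j` form a chord of `w`: the `U` at position `i` is matched with
the `D` at position `j` in the parenthesis matching, i.e. the heights before step `i`
and after step `j` agree and the path stays strictly above that level in between. -/
def IsChord (w : List Bool) (i j : ℕ) : Prop :=
  i < j ∧ j < w.length ∧ w.getD i false = true ∧ w.getD j true = false ∧
    prefixHeight w i = prefixHeight w (j + 1) ∧
    ∀ k, i < k → k ≤ j → prefixHeight w i < prefixHeight w k

open scoped Classical in
/-- The set of chords of `w`, given by the matching of parentheses. -/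
noncomputable def chords (w : List Bool) : Finset (ℕ × ℕ) :=
  (Finset.range w.length ×ˢ Finset.range w.length).filter fun p => IsChord w p.1 p.2

open scoped Classical in
/-- The length `l(c)` of a chord `c`: the number of chords weakly nested inside `c`,
i.e. one plus the number of chords strictly nested inside `c`. -/
noncomputable def chordLength (w : List Bool) (c : ℕ × ℕ) : ℕ :=
  ((chords w).filter fun p => c.1 ≤ p.1 ∧ p.2 ≤ c.2).card

/-! Every nonempty Dyck word is either a concatenation `a ++ b` of two nonempty Dyck words or a
wrapped word `U v D` with `v` a Dyck word. The chords of `a ++ b` are the chords of `a` together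
with the translated chords of `b`, with the same lengths, so the product of the chord lengths is
multiplicative and `m! k! ∣ (m + k)!` handles this case. The chords of `U v D` are the translated
chords of `v` plus the outer chord, which contains all `m + 1` chords; so the product gets the
factor `m + 1` while `m!` becomes `(m + 1)!`. -/

open Finset
open scoped Nat

@[simp]
lemma prefixHeight_zero (w : List Bool) : prefixHeight w 0 = 0 := by
  simp [prefixHeight]

@[simp]
lemma prefixHeight_cons_succ (x : Bool) (w : List Bool) (k : ℕ) :
    prefixHeight (x :: w) (k + 1) = (if x then 1 else -1) + prefixHeight w k := by
  cases x <;> simp [prefixHeight] <;> ring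

lemma prefixHeight_length (w : List Bool) :
    prefixHeight w w.length = w.count true - w.count false := by
  simp [prefixHeight]

lemma prefixHeight_append_of_le {a : List Bool} (b : List Bool) {k : ℕ} (hk : k ≤ a.length) :
    prefixHeight (a ++ b) k = prefixHeight a k := by
  simp [prefixHeight, List.take_append_of_le_length hk]

lemma prefixHeight_append_length_add (a b : List Bool) (k : ℕ) :
    prefixHeight (a ++ b) (a.length + k) = prefixHeight a a.length + prefixHeight b k := by
  simp [prefixHeight, List.take_append, List.take_of_length_le]
  ring

lemma isDyckWord_iff {w : List Bool} {n : ℕ} :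
    IsDyckWord w n ↔
      w.count true = n ∧ prefixHeight w w.length = 0 ∧ ∀ k ≤ w.length, 0 ≤ prefixHeight w k := by
  have := List.count_true_add_count_false w
  rw [IsDyckWord, prefixHeight_length]
  constructor
  · rintro ⟨h1, h2, h3⟩; exact ⟨h2, by omega, h3⟩
  · rintro ⟨h1, h2, h3⟩; exact ⟨by omega, h1, h3⟩

lemma IsDyckWord.prefixHeight_length_le {w : List Bool} {n : ℕ} (hw : IsDyckWord w n) :
    ∀ k ≤ w.length, prefixHeight w w.length ≤ prefixHeight w k := by
  obtain ⟨-, hbal, hnn⟩ := isDyckWord_iff.1 hw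
  exact hbal ▸ hnn

lemma IsDyckWord.of_append_of_prefixHeight_eq_zero {a b : List Bool} {n : ℕ}
    (hab : IsDyckWord (a ++ b) n) (ha : prefixHeight a a.length = 0) :
    IsDyckWord a (a.count true) ∧ IsDyckWord b (b.count true) := by
  obtain ⟨-, hbal, hnn⟩ := isDyckWord_iff.1 hab
  have hb : ∀ k, prefixHeight b k = prefixHeight (a ++ b) (a.length + k) := by
    simp [prefixHeight_append_length_add, ha]
  refine ⟨isDyckWord_iff.2 ⟨rfl, ha, fun k hk => ?_⟩,
    isDyckWord_iff.2 ⟨rfl, by simpa [hb] using hbal, fun k hk => ?_⟩⟩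
  · rw [← prefixHeight_append_of_le b hk]
    exact hnn k (by simp; omega)
  · rw [hb]
    exact hnn _ (by simp; omega)

lemma IsDyckWord.exists_eq_wrap {w : List Bool} {n : ℕ} (hw : IsDyckWord w (n + 1))
    (hpos : ∀ k, 0 < k → k < w.length → 0 < prefixHeight w k) :
    ∃ v, w = true :: v ++ [false] ∧ IsDyckWord v n := by
  obtain ⟨hcount, hbal, -⟩ := isDyckWord_iff.1 hw
  rcases w with _ | ⟨x, t⟩
  · simp [IsDyckWord] at hw
  obtain rfl | ⟨v, y, rfl⟩ := t.eq_nil_or_concat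
  · simp [IsDyckWord] at hw
    omega
  rw [List.concat_eq_append] at *
  have hv : ∀ k ≤ v.length,
      prefixHeight (x :: (v ++ [y])) (k + 1) = (if x then 1 else -1) + prefixHeight v k :=
    fun k hk => by rw [prefixHeight_cons_succ, prefixHeight_append_of_le _ hk]
  have hx : x = true := by
    have := hpos 1 one_pos (by simp)
    rw [hv 0 (Nat.zero_le _)] at this
    cases x <;> simp_all
  subst hx
  have hvnn : ∀ k ≤ v.length, 0 ≤ prefixHeight v k := by
    intro k hk
    have := hpos (k + 1) (by omega) (by simp; omega)
    rw [hv k hk] at this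
    simp only [if_true] at this
    omega
  have hlast : 0 = 1 + prefixHeight v v.length + (if y then 1 else -1) := by
    have := prefixHeight_append_length_add v [y] 1
    simp [this] at hbal
    linarith
  have hy : y = false := by
    cases y
    · rfl
    · simp only [if_true] at hlast
      linarith [hvnn v.length le_rfl]
  subst hy
  refine ⟨v, rfl, isDyckWord_iff.2 ⟨?_, ?_, hvnn⟩⟩
  · simpa using hcount
  · simp at hlast; omega

@[elab_as_elim]
theorem IsDyckWord.induction {motive : List Bool → ℕ → Prop} (nil : motive [] 0)
    (wrap : ∀ v n, IsDyckWord v n → motive v n → motive (true :: v ++ [false]) (n + 1))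
    (append : ∀ a b m k, IsDyckWord a m → IsDyckWord b k → motive a m → motive b k →
      motive (a ++ b) (m + k))
    {w : List Bool} {n : ℕ} (hw : IsDyckWord w n) : motive w n := by
  induction n using Nat.strong_induction_on generalizing w with
  | _ n ih =>
  rcases n with _ | n
  · obtain rfl : w = [] := List.eq_nil_of_length_eq_zero hw.1
    exact nil
  by_cases hsplit : ∃ k, 0 < k ∧ k < w.length ∧ prefixHeight w k = 0
  · obtain ⟨k, hk0, hkw, hk⟩ := hsplit
    have hklen : (w.take k).length = k := List.length_take_of_le hkw.le
    have hdlen : (w.drop k).length = w.length - k := List.length_drop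
    rw [← List.take_append_drop k w] at hw ⊢
    have ha0 : prefixHeight (w.take k) (w.take k).length = 0 := by
      rw [hklen, ← prefixHeight_append_of_le (w.drop k) hklen.ge, List.take_append_drop, hk]
    obtain ⟨ha, hb⟩ := hw.of_append_of_prefixHeight_eq_zero ha0
    have hsize := hw.2.1
    rw [List.count_append] at hsize
    rw [← hsize]
    exact append _ _ _ _ ha hb (ih _ (by have := ha.1; have := hb.1; omega) ha)
      (ih _ (by have := ha.1; have := hb.1; omega) hb)
  · push Not at hsplit
    obtain ⟨v, rfl, hv⟩ := hw.exists_eq_wrap fun k hk0 hkw =>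
      lt_of_le_of_ne (hw.2.2 k hkw.le) (hsplit k hk0 hkw).symm
    exact wrap v n hv (ih n (by omega) hv)

lemma mem_chords {w : List Bool} {c : ℕ × ℕ} : c ∈ chords w ↔ IsChord w c.1 c.2 := by
  simp only [chords, mem_filter, mem_product, mem_range, and_iff_right_iff_imp]
  exact fun h => ⟨h.1.trans h.2.1, h.2.1⟩

lemma isChord_append_of_lt_iff {a : List Bool} (b : List Bool) {i j : ℕ} (hj : j < a.length) :
    IsChord (a ++ b) i j ↔ IsChord a i j := by
  have hh : ∀ k ≤ j + 1, prefixHeight (a ++ b) k = prefixHeight a k :=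
    fun k hk => prefixHeight_append_of_le b (by omega)
  by_cases hij : i < j
  · simp only [IsChord, hij, hj, true_and, List.getD_append _ _ _ _ (hij.trans hj),
      List.getD_append _ _ _ _ hj, hh i (by omega), hh (j + 1) le_rfl, List.length_append,
      show j < a.length + b.length by omega]
    refine and_congr_right fun _ => and_congr_right fun _ => and_congr_right fun _ =>
      forall_congr' fun k => imp_congr_right fun _ => imp_congr_right fun hk => ?_
    rw [hh k (by omega)]
  · simp [IsChord, hij]

lemma isChord_append_length_add_iff (a b : List Bool) (i j : ℕ) :
    IsChord (a ++ b) (a.length + i) (a.length + j) ↔ IsChord b i j := by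
  simp only [IsChord, add_lt_add_iff_left, List.length_append,
    List.getD_append_right _ _ _ _ (Nat.le_add_right _ _), Nat.add_sub_cancel_left,
    add_assoc, prefixHeight_append_length_add]
  refine and_congr_right fun _ => and_congr_right fun _ => and_congr_right fun _ =>
    and_congr_right fun _ => and_congr (add_right_inj _)
      ⟨fun H k hk1 hk2 => ?_, fun H k hk1 hk2 => ?_⟩
  · simpa [prefixHeight_append_length_add] using H (a.length + k) (by omega) (by omega)
  · obtain ⟨k, rfl⟩ := Nat.exists_eq_add_of_lt hk1
    have := H (i + k + 1) (by omega) (by omega)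
    rw [show a.length + i + k + 1 = a.length + (i + k + 1) by omega,
      prefixHeight_append_length_add]
    omega

lemma isChord_cons_succ_iff (x : Bool) (w : List Bool) (i j : ℕ) :
    IsChord (x :: w) (i + 1) (j + 1) ↔ IsChord w i j := by
  rw [add_comm i, add_comm j]
  exact isChord_append_length_add_iff [x] w i j

lemma IsChord.lt_length_or_length_le {a b : List Bool} {i j : ℕ}
    (ha : ∀ k ≤ a.length, prefixHeight a a.length ≤ prefixHeight a k)
    (h : IsChord (a ++ b) i j) : j < a.length ∨ a.length ≤ i := by
  by_contra! hij
  have := h.2.2.2.2.2 a.length hij.2 hij.1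
  rw [prefixHeight_append_of_le b le_rfl, prefixHeight_append_of_le b hij.2.le] at this
  exact (ha i hij.2.le).not_gt this

def shiftPair (s : ℕ) : ℕ × ℕ ↪ ℕ × ℕ :=
  (addLeftEmbedding s).prodMap (addLeftEmbedding s)

@[simp]
lemma shiftPair_apply (s : ℕ) (c : ℕ × ℕ) : shiftPair s c = (s + c.1, s + c.2) := rfl

lemma chords_append {a : List Bool} (b : List Bool)
    (ha : ∀ k ≤ a.length, prefixHeight a a.length ≤ prefixHeight a k) :
    chords (a ++ b) = chords a ∪ (chords b).map (shiftPair a.length) := by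
  ext ⟨i, j⟩
  simp only [mem_union, mem_map, mem_chords, shiftPair_apply, Prod.ext_iff]
  constructor
  · intro h
    rcases h.lt_length_or_length_le ha with hj | hi
    · exact Or.inl ((isChord_append_of_lt_iff b hj).1 h)
    · obtain ⟨i, rfl⟩ := Nat.exists_eq_add_of_le hi
      obtain ⟨j, rfl⟩ := Nat.exists_eq_add_of_le (hi.trans h.1.le)
      exact Or.inr ⟨(i, j), (isChord_append_length_add_iff a b i j).1 h, rfl, rfl⟩
  · rintro (h | ⟨c, hc, rfl, rfl⟩)
    · exact (isChord_append_of_lt_iff b h.2.1).2 h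
    · exact (isChord_append_length_add_iff a b _ _).2 hc

lemma prefixHeight_wrap (v : List Bool) {k : ℕ} (hk : k ≤ v.length) :
    prefixHeight (true :: v ++ [false]) (k + 1) = 1 + prefixHeight v k := by
  simp [prefixHeight_append_of_le _ hk]

lemma prefixHeight_wrap_length (v : List Bool) :
    prefixHeight (true :: v ++ [false]) (v.length + 2) = prefixHeight v v.length := by
  simp [prefixHeight_append_length_add v [false] 1]

lemma isChord_wrap_zero_iff {v : List Bool} {m : ℕ} (hv : IsDyckWord v m) (j : ℕ) :
    IsChord (true :: v ++ [false]) 0 j ↔ j = v.length + 1 := by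
  obtain ⟨-, hbal, hnn⟩ := isDyckWord_iff.1 hv
  constructor
  · rintro ⟨-, hj, -, -, heq, -⟩
    simp only [List.length_append, List.length_cons, List.length_nil] at hj
    by_contra hne
    rw [prefixHeight_zero, prefixHeight_wrap v (by omega)] at heq
    linarith [hnn j (by omega)]
  · rintro rfl
    refine ⟨by omega, by simp, by simp, by simp, ?_, fun k hk0 hk => ?_⟩
    · rw [prefixHeight_zero, prefixHeight_wrap_length, hbal]
    · obtain ⟨k, rfl⟩ := Nat.exists_eq_add_of_lt hk0
      rw [zero_add, prefixHeight_zero, prefixHeight_wrap v (by omega)]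
      linarith [hnn k (by omega)]

lemma chords_wrap {v : List Bool} {m : ℕ} (hv : IsDyckWord v m) :
    chords (true :: v ++ [false]) = insert (0, v.length + 1) ((chords v).map (shiftPair 1)) := by
  have hvf : chords (v ++ [false]) = chords v := by
    have hnil : chords [false] = ∅ := by
      ext ⟨i, j⟩
      simp only [mem_chords, notMem_empty, iff_false]
      rintro ⟨hij, hj, -⟩
      simp at hj
      omega
    obtain ⟨-, hbal, hnn⟩ := isDyckWord_iff.1 hv
    rw [chords_append [false] fun k hk => hbal ▸ hnn k hk, hnil, map_empty,
      union_empty]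
  ext ⟨i, j⟩
  simp only [mem_insert, mem_map, mem_chords, shiftPair_apply, Prod.ext_iff]
  rcases i with _ | i
  · rw [isChord_wrap_zero_iff hv]
    simp
  constructor
  · intro h
    obtain ⟨j, rfl⟩ : ∃ j', j = j' + 1 := ⟨j - 1, by have := h.1; omega⟩
    rw [List.cons_append, isChord_cons_succ_iff, ← mem_chords (c := (i, j)), hvf] at h
    exact Or.inr ⟨(i, j), mem_chords.1 h, add_comm _ _, add_comm _ _⟩
  · rintro (⟨h, -⟩ | ⟨c, hc, hi, rfl⟩)
    · omega
    · obtain rfl : c.1 = i := by omega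
      rw [List.cons_append, add_comm 1, isChord_cons_succ_iff, ← mem_chords, hvf]
      exact mem_chords.2 hc

lemma chordLength_pos {w : List Bool} {c : ℕ × ℕ} (hc : c ∈ chords w) :
    0 < chordLength w c :=
  card_pos.2 ⟨c, mem_filter.2 ⟨hc, le_rfl, le_rfl⟩⟩

lemma disjoint_chords_map_shiftPair_length (a b : List Bool) :
    Disjoint (chords a) ((chords b).map (shiftPair a.length)) := by
  refine disjoint_left.2 fun p hp hp' => ?_
  obtain ⟨c, -, rfl⟩ := mem_map.1 hp'
  have := (mem_chords.1 hp).1.trans (mem_chords.1 hp).2.1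
  simp at this

section Append

variable {a : List Bool} (b : List Bool)
  (ha : ∀ k ≤ a.length, prefixHeight a a.length ≤ prefixHeight a k)
include ha

lemma chordLength_append_of_mem {c : ℕ × ℕ} (hc : c ∈ chords a) :
    chordLength (a ++ b) c = chordLength a c := by
  have hca := (mem_chords.1 hc).2.1
  rw [chordLength, chords_append b ha, filter_union, filter_map,
    filter_false_of_mem (s := chords b) fun p _ => ?_, map_empty, union_empty, chordLength]
  simp
  omega

lemma chordLength_append_shiftPair (c : ℕ × ℕ) :
    chordLength (a ++ b) (shiftPair a.length c) = chordLength b c := by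
  rw [chordLength, chords_append b ha, filter_union, filter_map,
    filter_false_of_mem fun p hp => ?_, empty_union, card_map, chordLength]
  · simp [Function.comp_def]
  · have := (mem_chords.1 hp).1
    have := (mem_chords.1 hp).2.1
    simp
    omega

lemma prod_chordLength_append :
    ∏ c ∈ chords (a ++ b), chordLength (a ++ b) c =
      (∏ c ∈ chords a, chordLength a c) * ∏ c ∈ chords b, chordLength b c := by
  rw [chords_append b ha, prod_union (disjoint_chords_map_shiftPair_length a b), prod_map,
    prod_congr rfl fun c hc => chordLength_append_of_mem b ha hc]
  simp only [chordLength_append_shiftPair b ha]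

end Append

lemma card_chords {w : List Bool} {n : ℕ} (hw : IsDyckWord w n) : #(chords w) = n := by
  refine hw.induction rfl (fun v m hv ih => ?_) (fun a b m k ha _ iha ihb => ?_)
  · rw [chords_wrap hv, card_insert_of_notMem (by simp), card_map, ih]
  · rw [chords_append b ha.prefixHeight_length_le,
      card_union_of_disjoint (disjoint_chords_map_shiftPair_length a b), card_map, iha, ihb]

section Wrap

variable {v : List Bool} {m : ℕ} (hv : IsDyckWord v m)
include hv

lemma chordLength_wrap_top : chordLength (true :: v ++ [false]) (0, v.length + 1) = m + 1 := by
  rw [chordLength, filter_true_of_mem fun p hp => ?_, chords_wrap hv, card_insert_of_notMem,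
    card_map, card_chords hv]
  · simp
  · have := (mem_chords.1 hp).2.1
    simp at this ⊢
    omega

lemma chordLength_wrap_shiftPair (c : ℕ × ℕ) :
    chordLength (true :: v ++ [false]) (shiftPair 1 c) = chordLength v c := by
  rw [chordLength, chords_wrap hv, filter_insert, if_neg (by simp), filter_map, card_map,
    chordLength]
  simp [Function.comp_def]

lemma prod_chordLength_wrap :
    ∏ c ∈ chords (true :: v ++ [false]), chordLength (true :: v ++ [false]) c =
      (m + 1) * ∏ c ∈ chords v, chordLength v c := by
  rw [chords_wrap hv, prod_insert (by simp), prod_map, chordLength_wrap_top hv]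
  simp only [chordLength_wrap_shiftPair hv]

end Wrap

lemma prod_chordLength_dvd_factorial {w : List Bool} {n : ℕ} (hw : IsDyckWord w n) :
    ∏ c ∈ chords w, chordLength w c ∣ n ! := by
  refine hw.induction (by simp [chords]) (fun v m hv ih => ?_)
    (fun a b m k ha _ iha ihb => ?_)
  · rw [prod_chordLength_wrap hv, Nat.factorial_succ]
    exact mul_dvd_mul_left _ ih
  · rw [prod_chordLength_append b ha.prefixHeight_length_le]
    exact (mul_dvd_mul iha ihb).trans (Nat.factorial_mul_factorial_dvd_factorial_add m k)

/-- Hook-length-type formula at `q = 1`: for a Dyck path `λ` of size `n`, the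
product of the chord lengths divides `n!`, and the quotient
`n! / ∏_{c ∈ Chord(λ)} l(c)` is a positive integer (it counts cover-inclusive
Dyck tilings above `λ`). -/
theorem factorial_div_prod_chordLength_pos (n : ℕ) (w : List Bool) (hw : IsDyckWord w n) :
    (∏ c ∈ chords w, chordLength w c) ∣ n.factorial ∧
      0 < n.factorial / ∏ c ∈ chords w, chordLength w c := by
  have hdvd := prod_chordLength_dvd_factorial hw
  have hprod : 0 < ∏ c ∈ chords w, chordLength w c := prod_pos fun c hc => chordLength_pos hc
  exact ⟨hdvd, Nat.div_pos (Nat.le_of_dvd n.factorial_pos hdvd) hprod⟩
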